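/- Let X and Y be real inner product spaces of the same finite dimension d, and let T : X → Y be a linear operator. For every ε > 0, the covering number satisfies 𝒞(ε, T) ≥ √(det(T*T)) · (1/ε)^d, where T* is the adjoint of T and det(T*T) is the determinant of the endomorphism T*T of X. -/

import Mathlib

/-! In `Y`, the image `T(B_X)` has volume `√det(T*T) · vol(B)` (the norm determinant of `T`
scales `d`-dimensional volume), while each of `N` covering balls of radius `ε` has volume
`ε^d · vol(B)`. Comparing volumes gives `√det(T*T) ≤ N ε^d`. -/

open Metric
open scoped ENNReal

noncomputable def coveringNumber {X : Type*} [PseudoMetricSpace X] (ε : ℝ) (A : Set X) : ℕ∞ :=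
  sInf {n : ℕ∞ | ∃ t : Finset X, (t.card : ℕ∞) = n ∧ A ⊆ ⋃ c ∈ t, Metric.closedBall c ε}

open MeasureTheory Module

theorem exists_finset_card_eq_coveringNumber {X : Type*} [PseudoMetricSpace X] {ε : ℝ}
    {A : Set X} (h : coveringNumber ε A ≠ ⊤) :
    ∃ t : Finset X, (t.card : ℕ∞) = coveringNumber ε A ∧ A ⊆ ⋃ c ∈ t, closedBall c ε := by
  have hne : {n : ℕ∞ | ∃ t : Finset X, (t.card : ℕ∞) = n ∧ A ⊆ ⋃ c ∈ t, closedBall c ε}.Nonempty :=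
    Set.nonempty_iff_ne_empty.2 fun he ↦ h (by rw [_root_.coveringNumber, he, sInf_empty])
  exact csInf_mem hne

section Haar

variable {E : Type*} [NormedAddCommGroup E] [MeasurableSpace E] [BorelSpace E]
  (μ : Measure E) [μ.IsAddHaarMeasure]

theorem measure_le_card_mul_of_subset_biUnion_closedBall {A : Set E} {ε : ℝ} {t : Finset E}
    (ht : A ⊆ ⋃ c ∈ t, closedBall c ε) : μ A ≤ t.card * μ (closedBall 0 ε) :=
  calc μ A ≤ ∑ c ∈ t, μ (closedBall c ε) := (measure_mono ht).trans (measure_biUnion_finset_le _ _)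
    _ = t.card * μ (closedBall 0 ε) := by
      simp only [Measure.addHaar_closedBall_center, Finset.sum_const, nsmul_eq_mul]

theorem measure_le_coveringNumber_mul (A : Set E) {ε : ℝ} (hε : 0 < ε) :
    μ A ≤ coveringNumber ε A * μ (closedBall 0 ε) := by
  by_cases h : coveringNumber ε A = ⊤
  · rw [h, ENat.toENNReal_top, ENNReal.top_mul (measure_closedBall_pos μ 0 hε).ne']
    exact le_top
  · obtain ⟨t, hcard, ht⟩ := exists_finset_card_eq_coveringNumber h
    rw [← hcard]
    exact measure_le_card_mul_of_subset_biUnion_closedBall μ ht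

end Haar

section InnerProductSpace

variable {X Y : Type*}
  [NormedAddCommGroup X] [InnerProductSpace ℝ X] [FiniteDimensional ℝ X]
  [NormedAddCommGroup Y] [InnerProductSpace ℝ Y] [FiniteDimensional ℝ Y]

theorem LinearMap.sqrt_det_adjoint_comp_self (T : X →ₗ[ℝ] Y) :
    √(LinearMap.adjoint T ∘ₗ T).det = T.normDet := by
  rw [← T.normDet_sq, RCLike.ofReal_real_eq_id, id_eq, Real.sqrt_sq T.normDet_nonneg]

variable [MeasurableSpace X] [BorelSpace X] [MeasurableSpace Y] [BorelSpace Y]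

theorem LinearMap.volume_image_of_finrank_eq (T : X →ₗ[ℝ] Y) (h : finrank ℝ X = finrank ℝ Y)
    (s : Set X) : volume (T '' s) = ENNReal.ofReal T.normDet * volume s := by
  rw [← T.euclideanHausdorffMeasure_image_eq_normDet_mul_volume, h,
    InnerProductSpace.euclideanHausdorffMeasure_eq_volume]

theorem volume_closedBall_zero_eq_of_finrank_eq (h : finrank ℝ X = finrank ℝ Y) (r : ℝ) :
    volume (closedBall (0 : X) r) = volume (closedBall (0 : Y) r) := by
  let e : X ≃ₗᵢ[ℝ] Y := (stdOrthonormalBasis ℝ X).equiv (stdOrthonormalBasis ℝ Y) (finCongr h)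
  rw [← e.measurePreserving.measure_preimage measurableSet_closedBall.nullMeasurableSet,
    e.preimage_closedBall, map_zero]

theorem ofReal_normDet_le_coveringNumber_mul (T : X →ₗ[ℝ] Y) (h : finrank ℝ X = finrank ℝ Y)
    {ε : ℝ} (hε : 0 < ε) :
    ENNReal.ofReal T.normDet ≤
      coveringNumber ε (T '' closedBall 0 1) * ENNReal.ofReal (ε ^ finrank ℝ X) := by
  have hB₀ : volume (closedBall (0 : X) 1) ≠ 0 := (measure_closedBall_pos _ _ one_pos).ne'
  have hB : volume (closedBall (0 : X) 1) ≠ ⊤ := measure_closedBall_lt_top.ne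
  refine (ENNReal.mul_le_mul_iff_left hB₀ hB).1 ?_
  calc ENNReal.ofReal T.normDet * volume (closedBall (0 : X) 1)
      = volume (T '' closedBall 0 1) := (T.volume_image_of_finrank_eq h _).symm
    _ ≤ coveringNumber ε (T '' closedBall 0 1) * volume (closedBall (0 : Y) ε) :=
      measure_le_coveringNumber_mul _ _ hε
    _ = coveringNumber ε (T '' closedBall 0 1) * ENNReal.ofReal (ε ^ finrank ℝ X) *
          volume (closedBall (0 : X) 1) := by
      rw [Measure.addHaar_closedBall' _ _ hε.le, ← volume_closedBall_zero_eq_of_finrank_eq h, h,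
        mul_assoc]

end InnerProductSpace

theorem coveringNumber_ge_det {X Y : Type*}
    [NormedAddCommGroup X] [InnerProductSpace ℝ X] [FiniteDimensional ℝ X]
    [NormedAddCommGroup Y] [InnerProductSpace ℝ Y] [FiniteDimensional ℝ Y]
    (d : ℕ) (hdX : Module.finrank ℝ X = d) (hdY : Module.finrank ℝ Y = d)
    (T : X →ₗ[ℝ] Y) (ε : ℝ) (hε : 0 < ε) :
    ENNReal.ofReal (Real.sqrt (LinearMap.det ((LinearMap.adjoint T) ∘ₗ T)) * (1 / ε) ^ d) ≤
      (coveringNumber ε (T '' Metric.closedBall 0 1) : ℝ≥0∞) := by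
  borelize X Y
  set N : ℝ≥0∞ := coveringNumber ε (T '' closedBall 0 1)
  have hcover : ENNReal.ofReal T.normDet ≤ N * ENNReal.ofReal (ε ^ d) :=
    hdX ▸ ofReal_normDet_le_coveringNumber_mul T (hdX.trans hdY.symm) hε
  rw [T.sqrt_det_adjoint_comp_self, ENNReal.ofReal_mul T.normDet_nonneg]
  calc ENNReal.ofReal T.normDet * ENNReal.ofReal ((1 / ε) ^ d)
      ≤ N * ENNReal.ofReal (ε ^ d) * ENNReal.ofReal ((1 / ε) ^ d) := by gcongr
    _ = N := by
      rw [mul_assoc, ← ENNReal.ofReal_mul (by positivity), ← mul_pow, mul_one_div_cancel hε.ne',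
        one_pow, ENNReal.ofReal_one, mul_one]
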